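/- Let Γ be a finite simple graph each of whose edges is colored red, green, or blue, with R red edges, G green edges, and B blue edges. If the number of rainbow triangles of Γ equals √(2·R·G·B) and this number is positive, then Γ is obtained from a blowup of a properly 3-edge-colored K4 by possibly adding a set of isolated vertices. -/

import Mathlib

open scoped Classical

noncomputable section

namespace RainbowTri

variable {V : Type*} [Fintype V]

/-- The finset of edges of `Γ` having color `c` (red = 0, green = 1, blue = 2). -/
def colorEdges (Γ : SimpleGraph V) (col : Sym2 V → Fin 3) (c : Fin 3) : Finset (Sym2 V) :=
  Finset.univ.filter (fun e => e ∈ Γ.edgeSet ∧ col e = c)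

/-- The finset of rainbow triangles: 3-sets of pairwise adjacent vertices whose three
edges receive three distinct colors. -/
def rainbowTriangles (Γ : SimpleGraph V) (col : Sym2 V → Fin 3) : Finset (Finset V) :=
  Finset.univ.filter (fun s => ∃ a b c : V, s = {a, b, c} ∧
    Γ.Adj a b ∧ Γ.Adj a c ∧ Γ.Adj b c ∧
    col s(a, b) ≠ col s(a, c) ∧ col s(a, b) ≠ col s(b, c) ∧ col s(a, c) ≠ col s(b, c))

/-- The finset of properly 3-edge-colored copies of `K₄`: 4-sets of pairwise adjacent
vertices on which each color appears on exactly two (disjoint) of the six edges. -/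
def properK4s (Γ : SimpleGraph V) (col : Sym2 V → Fin 3) : Finset (Finset V) :=
  Finset.univ.filter (fun s => ∃ a b c d : V, s = {a, b, c, d} ∧
    Γ.Adj a b ∧ Γ.Adj a c ∧ Γ.Adj a d ∧ Γ.Adj b c ∧ Γ.Adj b d ∧ Γ.Adj c d ∧
    col s(a, b) = col s(c, d) ∧ col s(a, c) = col s(b, d) ∧ col s(a, d) = col s(b, c) ∧
    col s(a, b) ≠ col s(a, c) ∧ col s(a, b) ≠ col s(a, d) ∧ col s(a, c) ≠ col s(a, d))

/-- The color pattern of a proper 3-edge-coloring of `K₄` on vertex set `Fin 4`: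
opposite edges get the same color ({0,1},{2,3} ↦ 0; {0,2},{1,3} ↦ 1; {0,3},{1,2} ↦ 2). -/
def pairColor (i j : Fin 4) : Fin 3 :=
  ⟨((i.val ^^^ j.val) - 1) % 3, Nat.mod_lt _ (by norm_num)⟩

/-- `Γ` (with edge coloring `col`) is obtained from a blowup of a properly
3-edge-colored `K₄` by possibly adding a set of isolated vertices: vertices mapped to
`none` are isolated, vertices are adjacent iff they lie in distinct parts, and colors
between parts follow the proper `K₄`-pattern up to a permutation `σ` of the colors. -/
def IsBlowupK4PlusIsolated (Γ : SimpleGraph V) (col : Sym2 V → Fin 3) : Prop :=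
  ∃ (P : V → Option (Fin 4)) (σ : Equiv.Perm (Fin 3)),
    (∀ u v : V, Γ.Adj u v ↔ ∃ i j : Fin 4, i ≠ j ∧ P u = some i ∧ P v = some j) ∧
    (∀ (u v : V) (i j : Fin 4), P u = some i → P v = some j → Γ.Adj u v →
      col s(u, v) = σ (pairColor i j))

/-- As `IsBlowupK4PlusIsolated`, where moreover the four parts have equal size. -/
def IsBalancedBlowupK4PlusIsolated (Γ : SimpleGraph V) (col : Sym2 V → Fin 3) : Prop :=
  ∃ (P : V → Option (Fin 4)) (σ : Equiv.Perm (Fin 3)),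
    (∀ u v : V, Γ.Adj u v ↔ ∃ i j : Fin 4, i ≠ j ∧ P u = some i ∧ P v = some j) ∧
    (∀ (u v : V) (i j : Fin 4), P u = some i → P v = some j → Γ.Adj u v →
      col s(u, v) = σ (pairColor i j)) ∧
    (∀ i j : Fin 4, (Finset.univ.filter (fun v => P v = some i)).card
      = (Finset.univ.filter (fun v => P v = some j)).card)

/-- `Γ` (with edge coloring `col`) is a balanced blowup of a properly 3-edge-colored
`K₄` (no extra isolated vertices). -/
def IsBalancedBlowupK4 (Γ : SimpleGraph V) (col : Sym2 V → Fin 3) : Prop :=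
  ∃ (P : V → Fin 4) (σ : Equiv.Perm (Fin 3)),
    (∀ u v : V, Γ.Adj u v ↔ P u ≠ P v) ∧
    (∀ u v : V, Γ.Adj u v → col s(u, v) = σ (pairColor (P u) (P v))) ∧
    (∀ i j : Fin 4, (Finset.univ.filter (fun v => P v = i)).card
      = (Finset.univ.filter (fun v => P v = j)).card)

/-- `d⁺(u,v)`: the number of vertices `w` with `uw` blue and `vw` green. -/
def dPlus (Γ : SimpleGraph V) (col : Sym2 V → Fin 3) (u v : V) : ℕ :=
  (Finset.univ.filter (fun w => Γ.Adj u w ∧ col s(u, w) = 2 ∧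
    Γ.Adj v w ∧ col s(v, w) = 1)).card

/-- `d⁻(u,v)`: the number of vertices `w` with `uw` green and `vw` blue. -/
def dMinus (Γ : SimpleGraph V) (col : Sym2 V → Fin 3) (u v : V) : ℕ :=
  (Finset.univ.filter (fun w => Γ.Adj u w ∧ col s(u, w) = 1 ∧
    Γ.Adj v w ∧ col s(v, w) = 2)).card

/-- `d_K(u,v)`: the number of ordered pairs `(w,x)` with `wx` red, `uw`, `vx` green
and `ux`, `vw` blue. -/
def dK (Γ : SimpleGraph V) (col : Sym2 V → Fin 3) (u v : V) : ℕ :=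
  (Finset.univ.filter (fun p : V × V => Γ.Adj p.1 p.2 ∧ col s(p.1, p.2) = 0 ∧
    Γ.Adj u p.1 ∧ col s(u, p.1) = 1 ∧ Γ.Adj v p.2 ∧ col s(v, p.2) = 1 ∧
    Γ.Adj u p.2 ∧ col s(u, p.2) = 2 ∧ Γ.Adj v p.1 ∧ col s(v, p.1) = 2)).card

/-- Ordered pairs of vertices inducing a red edge. -/
def redPairs (Γ : SimpleGraph V) (col : Sym2 V → Fin 3) : Finset (V × V) :=
  Finset.univ.filter (fun p => Γ.Adj p.1 p.2 ∧ col s(p.1, p.2) = 0)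

/-- The set `S` of ordered tuples `(u,v,x,y)` with `uv` red, `ux`, `uy` blue and
`vx`, `vy` green (`x = y` allowed). -/
def tupleSet (Γ : SimpleGraph V) (col : Sym2 V → Fin 3) : Finset (V × V × V × V) :=
  Finset.univ.filter (fun t => Γ.Adj t.1 t.2.1 ∧ col s(t.1, t.2.1) = 0 ∧
    Γ.Adj t.1 t.2.2.1 ∧ col s(t.1, t.2.2.1) = 2 ∧
    Γ.Adj t.1 t.2.2.2 ∧ col s(t.1, t.2.2.2) = 2 ∧
    Γ.Adj t.2.1 t.2.2.1 ∧ col s(t.2.1, t.2.2.1) = 1 ∧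
    Γ.Adj t.2.1 t.2.2.2 ∧ col s(t.2.1, t.2.2.2) = 1)

/-!
Orient every rainbow triangle so that its edges are `uv` red, `uw` blue and `vw` green. Then
`T = ∑ d⁺(u, v)` over the `2R` ordered red pairs, while `∑ d⁺(u, v)²` counts the tuples of
`tupleSet`, which inject into (blue edge, green edge) pairs via `(u, v, x, y) ↦ (ux, vy)`.
By Cauchy–Schwarz, `T² ≤ 2R · ∑ d⁺² ≤ 2R · B · G`, so when `T² = 2RGB` both inequalities are
equalities: `d⁺` is constant, hence positive, on red pairs, and every pair of a blue and a green
edge is hit. After permuting the colours, the latter says that two differently coloured edges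
`px`, `py` close up to a rainbow triangle `pxy`, and that any two differently coloured edges
are joined by an edge. Together with a properly coloured `K₄` given by positivity of `d⁺`,
this forces every non-isolated vertex to be joined to the `K₄` exactly like one of its four
vertices, which is the blowup structure.
-/

open Finset

theorem _root_.Finset.sum_sq_card_mul_sub_sum {ι R : Type*} [CommRing R] (s : Finset ι)
    (f : ι → R) :
    ∑ i ∈ s, (#s * f i - ∑ j ∈ s, f j) ^ 2
      = #s * (#s * ∑ i ∈ s, f i ^ 2 - (∑ i ∈ s, f i) ^ 2) := by
  simp only [sub_sq, sum_add_distrib, sum_sub_distrib, mul_pow, ← mul_sum, ← sum_mul, sum_const,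
    nsmul_eq_mul]
  ring

theorem _root_.Finset.card_mul_eq_sum_of_sq_sum_eq {ι R : Type*} [CommRing R] [LinearOrder R]
    [IsStrictOrderedRing R] {s : Finset ι} {f : ι → R}
    (h : (∑ i ∈ s, f i) ^ 2 = #s * ∑ i ∈ s, f i ^ 2) {i : ι} (hi : i ∈ s) :
    #s * f i = ∑ j ∈ s, f j := by
  have h0 : ∑ i ∈ s, (#s * f i - ∑ j ∈ s, f j) ^ 2 = 0 := by
    rw [sum_sq_card_mul_sub_sum, ← h, sub_self, mul_zero]
  rw [← sub_eq_zero, ← sq_eq_zero_iff]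
  exact (sum_eq_zero_iff_of_nonneg fun _ _ => sq_nonneg _).1 h0 i hi

lemma exists_perm_eq_two_eq_one :
    ∀ a b : Fin 3, a ≠ b → ∃ π : Equiv.Perm (Fin 3), π a = 2 ∧ π b = 1 := by
  decide

lemma pairColor_comm : ∀ i j : Fin 4, pairColor i j = pairColor j i := by decide

lemma exists_pairColor_eq : ∀ (i : Fin 4) (c : Fin 3), ∃ j ≠ i, pairColor i j = c := by decide

lemma exists_pairColor_ne : ∀ (i : Fin 4) (c : Fin 3), ∃ j ≠ i, pairColor i j ≠ c := by decide

lemma exists_ne_ne : ∀ i j : Fin 4, ∃ k, k ≠ i ∧ k ≠ j := by decide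

lemma eq_of_pairColor_eq : ∀ i j k : Fin 4, k ≠ i → k ≠ j →
    pairColor i k = pairColor j k → i = j := by decide

lemma eq_pairColor_of_ne : ∀ i j k : Fin 4, i ≠ j → k ≠ i → k ≠ j → ∀ c : Fin 3,
    c ≠ pairColor i k → c ≠ pairColor j k → c = pairColor i j := by decide

section Extremal

variable (Γ : SimpleGraph V) (col : Sym2 V → Fin 3)

def colorGraph (c : Fin 3) : SimpleGraph V where
  Adj u v := Γ.Adj u v ∧ col s(u, v) = c
  symm := ⟨fun _ _ h => ⟨h.1.symm, Sym2.eq_swap ▸ h.2⟩⟩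
  loopless := ⟨fun _ h => Γ.irrefl h.1⟩

lemma colorEdges_eq_edgeFinset (c : Fin 3) :
    colorEdges Γ col c = (colorGraph Γ col c).edgeFinset := by
  ext e
  induction e using Sym2.ind
  rw [SimpleGraph.mem_edgeFinset]
  simp [colorEdges, colorGraph]

lemma card_redPairs : #(redPairs Γ col) = 2 * #(colorEdges Γ col 0) := by
  rw [colorEdges_eq_edgeFinset, SimpleGraph.two_mul_card_edgeFinset]
  exact congrArg card (filter_congr_decidable _ _ _).symm

lemma card_rainbowTriangles :
    #(rainbowTriangles Γ col) = ∑ p ∈ redPairs Γ col, dPlus Γ col p.1 p.2 := by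
  -- `⟨(u, v), w⟩` is the triangle `uvw` with `uv` red, `uw` blue and `vw` green.
  refine (card_bij (fun (x : Σ _ : V × V, V) _ => ({x.1.1, x.1.2, x.2} : Finset V))
    ?_ ?_ ?_).symm.trans (card_sigma _ _)
  · rintro ⟨⟨u, v⟩, w⟩ h
    simp only [mem_sigma, redPairs, mem_filter, mem_univ, true_and] at h
    obtain ⟨⟨huv, cuv⟩, huw, cuw, hvw, cvw⟩ := h
    simp only [rainbowTriangles, mem_filter, mem_univ, true_and]
    exact ⟨u, v, w, rfl, huv, huw, hvw, by simp [cuv, cuw], by simp [cuv, cvw], by simp [cuw, cvw]⟩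
  · rintro ⟨⟨u, v⟩, w⟩ h ⟨⟨u', v'⟩, w'⟩ h' hs
    simp only [mem_sigma, redPairs, mem_filter, mem_univ, true_and] at h h'
    have hu : u' ∈ ({u, v, w} : Finset V) := hs ▸ by simp
    have hv : v' ∈ ({u, v, w} : Finset V) := hs ▸ by simp
    have hw : w' ∈ ({u, v, w} : Finset V) := hs ▸ by simp
    simp only [mem_insert, mem_singleton] at hu hv hw
    grind [Sym2.eq_swap, SimpleGraph.Adj.ne]
  · intro s h
    simp only [rainbowTriangles, mem_filter, mem_univ, true_and] at h
    obtain ⟨a, b, c, rfl, hab, hac, hbc, h1, h2, h3⟩ := h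
    have hperm : ∀ x y z : Fin 3, x ≠ y → x ≠ z → y ≠ z →
        (x = 0 ∧ y = 2) ∨ (x = 0 ∧ z = 2) ∨ (y = 0 ∧ x = 2) ∨ (y = 0 ∧ z = 2) ∨
        (z = 0 ∧ x = 2) ∨ (z = 0 ∧ y = 2) := by decide
    simp only [mem_sigma, redPairs, mem_filter, mem_univ, true_and]
    rcases hperm _ _ _ h1 h2 h3 with h | h | h | h | h | h <;>
      [refine ⟨⟨(a, b), c⟩, ?_, ?_⟩; refine ⟨⟨(b, a), c⟩, ?_, ?_⟩;
        refine ⟨⟨(a, c), b⟩, ?_, ?_⟩; refine ⟨⟨(c, a), b⟩, ?_, ?_⟩;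
        refine ⟨⟨(b, c), a⟩, ?_, ?_⟩; refine ⟨⟨(c, b), a⟩, ?_, ?_⟩] <;>
      grind [Sym2.eq_swap, SimpleGraph.adj_comm, insert_comm, pair_comm]

lemma card_tupleSet :
    #(tupleSet Γ col) = ∑ p ∈ redPairs Γ col, dPlus Γ col p.1 p.2 ^ 2 := by
  simp only [sq, dPlus, ← card_product]
  rw [← card_sigma]
  refine card_nbij' (fun t => ⟨(t.1, t.2.1), (t.2.2.1, t.2.2.2)⟩)
    (fun x => (x.1.1, x.1.2, x.2.1, x.2.2)) ?_ ?_ (fun _ _ => rfl) (fun _ _ => rfl)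
  · rintro ⟨u, v, x, y⟩ h
    simp_all [tupleSet, redPairs]
  · rintro ⟨⟨u, v⟩, ⟨x, y⟩⟩ h
    simp_all [tupleSet, redPairs]

def tupleEdges (t : V × V × V × V) : Sym2 V × Sym2 V := (s(t.1, t.2.2.1), s(t.2.1, t.2.2.2))

lemma mapsTo_tupleEdges :
    Set.MapsTo tupleEdges (tupleSet Γ col : Set (V × V × V × V))
      (colorEdges Γ col 2 ×ˢ colorEdges Γ col 1 : Finset _) := by
  rintro ⟨u, v, x, y⟩ h
  simp_all [tupleSet, tupleEdges, colorEdges]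

lemma injOn_tupleEdges : Set.InjOn tupleEdges (tupleSet Γ col : Set (V × V × V × V)) := by
  rintro ⟨u, v, x, y⟩ h ⟨u', v', x', y'⟩ h' he
  simp only [coe_filter, tupleSet, Set.mem_ofPred_eq, tupleEdges, Prod.mk.injEq, Sym2.eq_iff]
    at h h' he
  grind [Sym2.eq_swap]

lemma card_tupleSet_le : #(tupleSet Γ col) ≤ #(colorEdges Γ col 2) * #(colorEdges Γ col 1) :=
  card_product (colorEdges Γ col 2) (colorEdges Γ col 1) ▸
    card_le_card_of_injOn _ (mapsTo_tupleEdges Γ col) (injOn_tupleEdges Γ col)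

-- The equality case `T = √(2RGB) > 0`; the product runs over all colours so that it is
-- invariant under permuting them.
def IsExtremal : Prop :=
  #(rainbowTriangles Γ col) ^ 2 = 2 * ∏ c, #(colorEdges Γ col c) ∧ 0 < #(rainbowTriangles Γ col)

variable {Γ col}

lemma IsExtremal.sq_sum_dPlus_eq_and_card_tupleSet_eq (h : IsExtremal Γ col) :
    (∑ p ∈ redPairs Γ col, dPlus Γ col p.1 p.2) ^ 2
        = #(redPairs Γ col) * ∑ p ∈ redPairs Γ col, dPlus Γ col p.1 p.2 ^ 2 ∧
      #(tupleSet Γ col) = #(colorEdges Γ col 2) * #(colorEdges Γ col 1) := by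
  obtain ⟨hsq, hpos⟩ := h
  rw [Fin.prod_univ_three] at hsq
  have hCS := sq_sum_le_card_mul_sum_sq (s := redPairs Γ col) (f := fun p => dPlus Γ col p.1 p.2)
  rw [Nat.cast_id, ← card_rainbowTriangles, ← card_tupleSet] at hCS
  have hle : #(redPairs Γ col) * #(tupleSet Γ col)
      ≤ #(redPairs Γ col) * (#(colorEdges Γ col 2) * #(colorEdges Γ col 1)) :=
    Nat.mul_le_mul_left _ (card_tupleSet_le Γ col)
  have htop : #(redPairs Γ col) * (#(colorEdges Γ col 2) * #(colorEdges Γ col 1))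
      = #(rainbowTriangles Γ col) ^ 2 := by
    rw [hsq, card_redPairs]
    ring
  have hn : 0 < #(redPairs Γ col) := by
    have : 0 < 2 * (#(colorEdges Γ col 0) * #(colorEdges Γ col 1) * #(colorEdges Γ col 2)) :=
      hsq ▸ pow_pos hpos 2
    rw [card_redPairs]
    simp only [pos_iff_ne_zero, mul_ne_zero_iff] at this ⊢
    tauto
  rw [← card_rainbowTriangles, ← card_tupleSet]
  exact ⟨le_antisymm hCS (hle.trans htop.le),
    Nat.eq_of_mul_eq_mul_left hn (le_antisymm hle (htop ▸ hCS))⟩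

lemma IsExtremal.dPlus_pos (h : IsExtremal Γ col) {u v : V} (huv : Γ.Adj u v)
    (hc : col s(u, v) = 0) : 0 < dPlus Γ col u v := by
  have hmem : (u, v) ∈ redPairs Γ col := by simp [redPairs, huv, hc]
  have hsum := card_mul_eq_sum_of_sq_sum_eq (s := redPairs Γ col)
    (f := fun p => (dPlus Γ col p.1 p.2 : ℤ))
    (by exact_mod_cast h.sq_sum_dPlus_eq_and_card_tupleSet_eq.1) hmem
  have hT : (0 : ℤ) < ∑ p ∈ redPairs Γ col, (dPlus Γ col p.1 p.2 : ℤ) := by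
    exact_mod_cast card_rainbowTriangles Γ col ▸ h.2
  rw [← hsum] at hT
  exact_mod_cast pos_of_mul_pos_right hT (by positivity)

lemma IsExtremal.exists_mem_tupleSet (h : IsExtremal Γ col) {e f : Sym2 V}
    (he : e ∈ colorEdges Γ col 2) (hf : f ∈ colorEdges Γ col 1) :
    ∃ t ∈ tupleSet Γ col, tupleEdges t = (e, f) :=
  surjOn_of_injOn_of_card_le _ (mapsTo_tupleEdges Γ col) (injOn_tupleEdges Γ col)
    (by rw [card_product, h.sq_sum_dPlus_eq_and_card_tupleSet_eq.2]) (mem_product.2 ⟨he, hf⟩)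

lemma rainbowTriangles_perm_comp (π : Equiv.Perm (Fin 3)) :
    rainbowTriangles Γ (π ∘ col) = rainbowTriangles Γ col := by
  simp [rainbowTriangles]

lemma colorEdges_perm_comp (π : Equiv.Perm (Fin 3)) (c : Fin 3) :
    colorEdges Γ (π ∘ col) c = colorEdges Γ col (π.symm c) := by
  simp [colorEdges, Equiv.eq_symm_apply]

lemma IsExtremal.perm_comp (h : IsExtremal Γ col) (π : Equiv.Perm (Fin 3)) :
    IsExtremal Γ (π ∘ col) := by
  simp only [IsExtremal, rainbowTriangles_perm_comp, colorEdges_perm_comp]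
  rw [Equiv.prod_comp π.symm (fun c => #(colorEdges Γ col c))]
  exact h

lemma IsExtremal.exists_diamond (h : IsExtremal Γ col) {a b x y : V} (hab : Γ.Adj a b)
    (hxy : Γ.Adj x y) (hc : col s(a, b) ≠ col s(x, y)) :
    ∃ u u' v v', s(u, u') = s(a, b) ∧ s(v, v') = s(x, y) ∧ Γ.Adj u v ∧ Γ.Adj u v' ∧
      Γ.Adj v u' ∧ col s(u, v) ≠ col s(a, b) ∧ col s(u, v) ≠ col s(x, y) := by
  obtain ⟨π, hπa, hπb⟩ := exists_perm_eq_two_eq_one _ _ hc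
  obtain ⟨⟨u, v, u', v'⟩, ht, he⟩ := (h.perm_comp π).exists_mem_tupleSet
    (e := s(a, b)) (f := s(x, y)) (by simp [colorEdges, hab, hπa]) (by simp [colorEdges, hxy, hπb])
  simp only [tupleSet, mem_filter, mem_univ, true_and, Function.comp_apply] at ht
  simp only [tupleEdges, Prod.mk.injEq] at he
  refine ⟨u, u', v, v', he.1, he.2, ht.1, ht.2.2.2.2.1, ht.2.2.2.2.2.2.1, ?_, ?_⟩
  · exact ne_of_apply_ne π (by rw [ht.2.1, hπa]; decide)
  · exact ne_of_apply_ne π (by rw [ht.2.1, hπb]; decide)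

lemma IsExtremal.adj_of_adj_of_adj (h : IsExtremal Γ col) {p x y : V} (hx : Γ.Adj p x)
    (hy : Γ.Adj p y) (hc : col s(p, x) ≠ col s(p, y)) :
    Γ.Adj x y ∧ col s(x, y) ≠ col s(p, x) ∧ col s(x, y) ≠ col s(p, y) := by
  obtain ⟨u, u', v, v', h1, h2, huv, huv', hvu', hc⟩ := h.exists_diamond hx hy hc
  rcases Sym2.eq_iff.1 h1 with ⟨rfl, rfl⟩ | ⟨rfl, rfl⟩ <;>
    rcases Sym2.eq_iff.1 h2 with ⟨rfl, rfl⟩ | ⟨rfl, rfl⟩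
  · exact absurd huv Γ.irrefl
  · exact absurd huv' Γ.irrefl
  · exact absurd hvu' Γ.irrefl
  · exact ⟨huv, hc⟩

lemma IsExtremal.exists_adj_of_color_ne (h : IsExtremal Γ col) {a b x y : V} (hab : Γ.Adj a b)
    (hxy : Γ.Adj x y) (hc : col s(a, b) ≠ col s(x, y)) :
    ∃ u ∈ s(a, b), ∃ v ∈ s(x, y), Γ.Adj u v :=
  let ⟨u, u', v, v', h1, h2, huv, _⟩ := h.exists_diamond hab hxy hc
  ⟨u, h1 ▸ Sym2.mem_mk_left u u', v, h2 ▸ Sym2.mem_mk_left v v', huv⟩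

-- The vertices in `InPart Γ col t · j` form the `j`-th part of the blowup.
variable (Γ col) in
def InPart (t : Fin 4 → V) (v : V) (j : Fin 4) : Prop :=
  ∀ k ≠ j, Γ.Adj v (t k) ∧ col s(v, t k) = pairColor j k

variable (Γ col) in
def IsColoredK4 (t : Fin 4 → V) : Prop :=
  ∀ j, InPart Γ col t (t j) j

variable {t : Fin 4 → V}

lemma IsExtremal.not_adj_of_inPart (h : IsExtremal Γ col) {u v : V} {j : Fin 4}
    (hu : InPart Γ col t u j) (hv : InPart Γ col t v j) : ¬Γ.Adj u v := by
  intro huv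
  obtain ⟨k, hkj, hk⟩ := exists_pairColor_ne j (col s(v, u))
  have hvk := hv k hkj
  have := (h.adj_of_adj_of_adj huv.symm hvk.1 (hvk.2 ▸ Ne.symm hk)).2.2
  exact this ((hu k hkj).2.trans hvk.2.symm)

lemma IsExtremal.adj_of_inPart (h : IsExtremal Γ col) {u v : V} {i j : Fin 4}
    (hu : InPart Γ col t u i) (hv : InPart Γ col t v j) (hij : i ≠ j) :
    Γ.Adj u v ∧ col s(u, v) = pairColor i j := by
  obtain ⟨k, hki, hkj⟩ := exists_ne_ne i j
  obtain ⟨huk, hcu⟩ := hu k hki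
  obtain ⟨hvk, hcv⟩ := hv k hkj
  rw [Sym2.eq_swap] at hcu hcv
  obtain ⟨huv, hc1, hc2⟩ := h.adj_of_adj_of_adj huk.symm hvk.symm
    (by rw [hcu, hcv]; exact fun he => hij (eq_of_pairColor_eq _ _ _ hki hkj he))
  exact ⟨huv, eq_pairColor_of_ne _ _ _ hij hki hkj _ (hcu ▸ hc1) (hcv ▸ hc2)⟩

lemma IsExtremal.exists_inPart_of_adj_vertex (h : IsExtremal Γ col) (ht : IsColoredK4 Γ col t)
    {v : V} {i : Fin 4} (hv : Γ.Adj v (t i)) : ∃ j, InPart Γ col t v j := by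
  obtain ⟨j, hji, hj⟩ := exists_pairColor_eq i (col s(v, t i))
  refine ⟨j, fun k hkj => ?_⟩
  rcases eq_or_ne i k with rfl | hik
  · exact ⟨hv, by rw [pairColor_comm, hj]⟩
  obtain ⟨hadj, hcik⟩ := ht i k hik.symm
  have hcv : col s(t i, v) = pairColor j i := by rw [Sym2.eq_swap, pairColor_comm, hj]
  rw [pairColor_comm] at hcik
  obtain ⟨hvk, hc1, hc2⟩ := h.adj_of_adj_of_adj hv.symm hadj
    (by rw [hcv, hcik]; exact fun he => hkj (eq_of_pairColor_eq _ _ _ hji.symm hik he).symm)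
  exact ⟨hvk, eq_pairColor_of_ne _ _ _ hkj.symm hji.symm hik _ (hcv ▸ hc1) (hcik ▸ hc2)⟩

lemma IsExtremal.exists_inPart_of_adj_inPart (h : IsExtremal Γ col) (ht : IsColoredK4 Γ col t)
    {v w : V} {j : Fin 4} (hw : InPart Γ col t w j) (hvw : Γ.Adj v w) :
    ∃ j', InPart Γ col t v j' := by
  obtain ⟨k, hkj, hk⟩ := exists_pairColor_ne j (col s(w, v))
  obtain ⟨hwk, hcwk⟩ := hw k hkj
  exact h.exists_inPart_of_adj_vertex ht
    (h.adj_of_adj_of_adj hvw.symm hwk (hcwk ▸ Ne.symm hk)).1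

lemma IsExtremal.exists_inPart (h : IsExtremal Γ col) (ht : IsColoredK4 Γ col t) {v w : V}
    (hvw : Γ.Adj v w) : ∃ j, InPart Γ col t v j := by
  obtain ⟨j, hj, hc⟩ := exists_pairColor_ne 0 (col s(v, w))
  obtain ⟨hadj, hcol⟩ := ht 0 j hj
  obtain ⟨x, hx, y, hy, hxy⟩ := h.exists_adj_of_color_ne hvw hadj (hcol ▸ Ne.symm hc)
  obtain ⟨k, hk⟩ : ∃ k, InPart Γ col t y k := by
    rcases Sym2.mem_iff.1 hy with rfl | rfl
    exacts [⟨0, ht 0⟩, ⟨j, ht j⟩]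
  obtain ⟨l, hl⟩ := h.exists_inPart_of_adj_inPart ht hk hxy
  rcases Sym2.mem_iff.1 hx with rfl | rfl
  exacts [⟨l, hl⟩, h.exists_inPart_of_adj_inPart ht hl hvw]

lemma IsExtremal.isBlowupK4PlusIsolated (h : IsExtremal Γ col) (ht : IsColoredK4 Γ col t) :
    IsBlowupK4PlusIsolated Γ col := by
  let P : V → Option (Fin 4) := fun v =>
    if hv : ∃ j, InPart Γ col t v j then some hv.choose else none
  have hP : ∀ {v i}, P v = some i → InPart Γ col t v i := by
    intro v i hvi
    by_cases hv : ∃ j, InPart Γ col t v j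
    · simp only [P, dif_pos hv, Option.some.injEq] at hvi
      exact hvi ▸ hv.choose_spec
    · simp [P, dif_neg hv] at hvi
  have hP' : ∀ {v w}, Γ.Adj v w → ∃ j, P v = some j ∧ InPart Γ col t v j := by
    intro v w hvw
    have hv := h.exists_inPart ht hvw
    exact ⟨hv.choose, by simp [P, dif_pos hv], hv.choose_spec⟩
  have hne : ∀ {v w i j}, P v = some i → P w = some j → Γ.Adj v w → i ≠ j :=
    fun hi hj hvw hij => h.not_adj_of_inPart (hP hi) (hij ▸ hP hj) hvw
  refine ⟨P, 1, fun v w => ⟨fun hvw => ?_, ?_⟩, fun v w i j hi hj hvw => ?_⟩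
  · obtain ⟨i, hi, -⟩ := hP' hvw
    obtain ⟨j, hj, -⟩ := hP' hvw.symm
    exact ⟨i, j, hne hi hj hvw, hi, hj⟩
  · rintro ⟨i, j, hij, hi, hj⟩
    exact (h.adj_of_inPart (hP hi) (hP hj) hij).1
  · exact (h.adj_of_inPart (hP hi) (hP hj) (hne hi hj hvw)).2

lemma IsExtremal.exists_isColoredK4 (h : IsExtremal Γ col) : ∃ t, IsColoredK4 Γ col t := by
  obtain ⟨⟨u, v⟩, hp, hd⟩ := sum_pos_iff.1 (card_rainbowTriangles Γ col ▸ h.2)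
  simp only [redPairs, mem_filter, mem_univ, true_and] at hp
  obtain ⟨w, hw⟩ := card_pos.1 hd
  obtain ⟨x, hx⟩ := card_pos.1 (h.dPlus_pos hp.1.symm (Sym2.eq_swap ▸ hp.2))
  simp only [mem_filter, mem_univ, true_and] at hw hx
  obtain ⟨hxw, hc⟩ := h.adj_of_adj_of_adj hx.2.2.1 hw.1 (by rw [hx.2.2.2, hw.2.1]; decide)
  have hcxw : col s(x, w) = 0 := by omega
  refine ⟨![u, v, x, w], fun j k hkj => ?_⟩
  fin_cases j <;> fin_cases k <;> simp_all [pairColor, SimpleGraph.adj_comm, Sym2.eq_swap]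

end Extremal

/-- If a 3-edge-colored graph has exactly `√(2·R·G·B) > 0` rainbow triangles, then it
is obtained from a blowup of a properly 3-edge-colored `K₄` by possibly adding a set
of isolated vertices. -/
theorem stmt1 (Γ : SimpleGraph V) (col : Sym2 V → Fin 3) (R G B T : ℕ)
    (hR : R = (colorEdges Γ col 0).card)
    (hG : G = (colorEdges Γ col 1).card)
    (hB : B = (colorEdges Γ col 2).card)
    (hT : T = (rainbowTriangles Γ col).card)
    (heq : (T : ℝ) = Real.sqrt (2 * R * G * B))
    (hpos : 0 < T) :
    IsBlowupK4PlusIsolated Γ col := by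
  have hsq : (T : ℝ) ^ 2 = 2 * R * G * B := by rw [heq, Real.sq_sqrt (by positivity)]
  have hext : IsExtremal Γ col := by
    refine ⟨?_, hT ▸ hpos⟩
    rw [Fin.prod_univ_three, ← hR, ← hG, ← hB, ← hT, ← mul_assoc, ← mul_assoc]
    exact_mod_cast hsq
  obtain ⟨t, ht⟩ := hext.exists_isColoredK4
  exact hext.isBlowupK4PlusIsolated ht

end RainbowTri
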